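/- arXiv:1704.08754 — 4 statements merged into one kernel-verified Lean document; each statement's English description precedes it below -/
import Mathlib

section
/- Assume a_X > b_X > 0, a_Y + b_Y > 0, and T_y > T_I, where T_I = max{0, (b_Y − a_Y)/(2·ln(a_X/b_X))}. Then T_X(x) > 0 for every x ∈ (1/2, 1), T_X(x) tends to 0 as x tends to 1 from the left, and for every T_x > 0 there exists x ∈ (1/2, 1) with T_X(x) = T_x. -/
open Real Filter Set Topology

/-- QRE response of the second player. -/
noncomputable def qreY (aY bY Ty : ℝ) (x : ℝ) : ℝ :=
  (1 + Real.exp ((bY - (aY + bY) * x) / Ty))⁻¹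

/-- QRE temperature curve for the first player. -/
noncomputable def qreTX (aX bX aY bY Ty : ℝ) (x : ℝ) : ℝ :=
  (bX - (aX + bX) * qreY aY bY Ty x) / Real.log (1 / x - 1)

/-- The auxiliary function L(x) = y(x) + x(1-x) ln(1/x-1) y'(x). -/
noncomputable def qreL (aY bY Ty : ℝ) (x : ℝ) : ℝ :=
  qreY aY bY Ty x + x * (1 - x) * Real.log (1 / x - 1) * deriv (qreY aY bY Ty) x

private lemma qreY_cont (aY bY Ty : ℝ) : Continuous (qreY aY bY Ty) := by
  have h : Continuous (fun x : ℝ => 1 + Real.exp ((bY - (aY + bY) * x) / Ty)) :=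
    continuous_const.add (Real.continuous_exp.comp
      ((continuous_const.sub (continuous_const.mul continuous_id)).div_const Ty))
  exact h.inv₀ (fun x => by positivity)

private lemma qre_num_neg (aX bX aY bY Ty : ℝ) (hTy : 0 < Ty) (hab : aX > bX) (hbX : bX > 0)
    (hY : aY + bY > 0) (hTI : (bY - aY) / (2 * Real.log (aX / bX)) < Ty)
    {x : ℝ} (hx : 1/2 ≤ x) : bX - (aX + bX) * qreY aY bY Ty x < 0 := by
  have haX : 0 < aX := hbX.trans hab
  have hlog : 0 < Real.log (aX / bX) := Real.log_pos ((one_lt_div hbX).mpr hab)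
  set u := (bY - (aY + bY) * x) / Ty with hu
  have hu2 : u ≤ (bY - aY) / (2 * Ty) := by
    rw [hu, div_le_div_iff₀ hTy (by positivity)]
    nlinarith [mul_le_mul_of_nonneg_left hx hY.le]
  have hulog : u < Real.log (aX / bX) := by
    rcases le_or_gt (bY - aY) 0 with h | h
    · have h0 : (bY - aY) / (2 * Ty) ≤ 0 := div_nonpos_iff.mpr (Or.inr ⟨h, by positivity⟩)
      linarith
    · have h1 : (bY - aY) / (2 * Ty) < Real.log (aX / bX) := by
        rw [div_lt_iff₀ (by positivity)]
        rw [div_lt_iff₀ (by positivity)] at hTI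
        nlinarith
      linarith
  have hexp : Real.exp u < aX / bX := by
    have h2 := Real.exp_lt_exp.mpr hulog
    rwa [Real.exp_log (by positivity)] at h2
  have hpos : 0 < 1 + Real.exp u := by positivity
  have hkey : bX * (1 + Real.exp u) < aX + bX := by
    have h3 := (lt_div_iff₀ hbX).mp hexp
    nlinarith
  have hmain : bX < (aX + bX) * qreY aY bY Ty x := by
    unfold qreY
    rw [← hu]
    have h2 : bX < (aX + bX) / (1 + Real.exp u) := (lt_div_iff₀ hpos).mpr (by linarith)
    rw [div_eq_mul_inv] at h2
    exact h2
  linarith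

private lemma qre_log_neg {x : ℝ} (hx : x ∈ Set.Ioo (1/2 : ℝ) 1) :
    Real.log (1 / x - 1) < 0 := by
  obtain ⟨h1, h2⟩ := hx
  have hx0 : 0 < x := by linarith
  have ha : 0 < 1 / x - 1 := by
    have : 1 < 1 / x := one_lt_one_div hx0 h2
    linarith
  have hb : 1 / x - 1 < 1 := by
    have : 1 / x < 2 := by
      rw [div_lt_iff₀ hx0]; linarith
    linarith
  exact Real.log_neg ha hb

set_option maxHeartbeats 1000000 in
theorem stmt_4 (aX bX aY bY Ty : ℝ) (hTy : 0 < Ty)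
    (hab : aX > bX) (hbX : bX > 0) (hY : aY + bY > 0)
    (hTI : Ty > max 0 ((bY - aY) / (2 * Real.log (aX / bX)))) :
    (∀ x ∈ Set.Ioo (1/2 : ℝ) 1, 0 < qreTX aX bX aY bY Ty x) ∧
    Filter.Tendsto (qreTX aX bX aY bY Ty) (𝓝[<] (1 : ℝ)) (𝓝 0) ∧
    ∀ Tx : ℝ, 0 < Tx → ∃ x ∈ Set.Ioo (1/2 : ℝ) 1, qreTX aX bX aY bY Ty x = Tx := by
  have hTI' : (bY - aY) / (2 * Real.log (aX / bX)) < Ty :=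
    lt_of_le_of_lt (le_max_right _ _) hTI
  have hnum : ∀ x : ℝ, 1/2 ≤ x → bX - (aX + bX) * qreY aY bY Ty x < 0 :=
    fun x hx => qre_num_neg aX bX aY bY Ty hTy hab hbX hY hTI' hx
  have hnumcont : Continuous (fun x => bX - (aX + bX) * qreY aY bY Ty x) :=
    continuous_const.sub (continuous_const.mul (qreY_cont aY bY Ty))
  -- Part 1 : positivity
  have part1 : ∀ x ∈ Set.Ioo (1/2 : ℝ) 1, 0 < qreTX aX bX aY bY Ty x := by
    intro x hx
    exact div_pos_of_neg_of_neg (hnum x hx.1.le) (qre_log_neg hx)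
  -- limit of log term at 1⁻
  have hevIoo : ∀ᶠ x in 𝓝[<] (1:ℝ), x ∈ Set.Ioo (1/2 : ℝ) 1 :=
    Ioo_mem_nhdsLT_of_mem (by constructor <;> norm_num)
  have hg : Tendsto (fun x : ℝ => Real.log (1 / x - 1)) (𝓝[<] (1:ℝ)) atBot := by
    apply Real.tendsto_log_nhdsGT_zero.comp
    rw [tendsto_nhdsWithin_iff]
    constructor
    · have hc : ContinuousAt (fun x : ℝ => 1 / x - 1) 1 :=
        (continuousAt_const.div continuousAt_id one_ne_zero).sub continuousAt_const
      have ht : Tendsto (fun x : ℝ => 1 / x - 1) (𝓝 1) (𝓝 ((1:ℝ)/1 - 1)) := hc.tendsto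
      rw [show (1:ℝ)/1 - 1 = 0 by norm_num] at ht
      exact ht.mono_left nhdsWithin_le_nhds
    · filter_upwards [hevIoo] with x hx
      obtain ⟨h1, h2⟩ := hx
      have hx0 : 0 < x := by linarith
      have : 1 < 1 / x := one_lt_one_div hx0 h2
      exact Set.mem_Ioi.mpr (by linarith)
  -- Part 2 : limit at 1⁻
  have hginv : Tendsto (fun x : ℝ => (Real.log (1 / x - 1))⁻¹) (𝓝[<] (1:ℝ)) (𝓝 0) := by
    have h1 := (tendsto_neg_atBot_atTop.comp hg).inv_tendsto_atTop
    have h2 := h1.neg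
    simp only [Function.comp_def, Pi.inv_apply, inv_neg, neg_neg, neg_zero] at h2
    exact h2
  have hnumt1 : Tendsto (fun x => bX - (aX + bX) * qreY aY bY Ty x) (𝓝[<] (1:ℝ))
      (𝓝 (bX - (aX + bX) * qreY aY bY Ty 1)) :=
    (hnumcont.tendsto 1).mono_left nhdsWithin_le_nhds
  have part2 : Tendsto (qreTX aX bX aY bY Ty) (𝓝[<] (1:ℝ)) (𝓝 0) := by
    have h := hnumt1.mul hginv
    rw [mul_zero] at h
    exact h.congr (fun x => (div_eq_mul_inv _ _).symm)
  -- limit at (1/2)⁺ : tends to atTop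
  have hevIoo' : ∀ᶠ x in 𝓝[>] (1/2 : ℝ), x ∈ Set.Ioo (1/2 : ℝ) 1 :=
    Ioo_mem_nhdsGT_of_mem (by constructor <;> norm_num)
  have hgneg : Tendsto (fun x : ℝ => -Real.log (1 / x - 1)) (𝓝[>] (1/2 : ℝ)) (𝓝[>] 0) := by
    rw [tendsto_nhdsWithin_iff]
    constructor
    · have hc : ContinuousAt (fun x : ℝ => -Real.log (1 / x - 1)) (1/2) := by
        have hinner : ContinuousAt (fun x : ℝ => 1 / x - 1) (1/2) :=
          (continuousAt_const.div continuousAt_id (by norm_num)).sub continuousAt_const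
        refine ContinuousAt.neg (ContinuousAt.comp (Real.continuousAt_log ?_) hinner)
        norm_num
      have h := hc.tendsto
      have hval : -Real.log (1 / (1/2 : ℝ) - 1) = 0 := by norm_num
      rw [hval] at h
      exact h.mono_left nhdsWithin_le_nhds
    · filter_upwards [hevIoo'] with x hx
      simpa using neg_pos.mpr (qre_log_neg hx)
  have hginv2 : Tendsto (fun x : ℝ => (Real.log (1 / x - 1))⁻¹) (𝓝[>] (1/2 : ℝ)) atBot := by
    have h1 := tendsto_inv_nhdsGT_zero.comp hgneg
    have h2 := tendsto_neg_atTop_atBot.comp h1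
    simp only [Function.comp_def, inv_neg, neg_neg] at h2
    exact h2
  have hnumt2 : Tendsto (fun x => bX - (aX + bX) * qreY aY bY Ty x) (𝓝[>] (1/2 : ℝ))
      (𝓝 (bX - (aX + bX) * qreY aY bY Ty (1/2))) :=
    (hnumcont.tendsto _).mono_left nhdsWithin_le_nhds
  have htop : Tendsto (qreTX aX bX aY bY Ty) (𝓝[>] (1/2 : ℝ)) atTop := by
    have h := Filter.Tendsto.neg_mul_atBot (hnum (1/2) le_rfl) hnumt2 hginv2
    exact h.congr (fun x => (div_eq_mul_inv _ _).symm)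
  refine ⟨part1, part2, ?_⟩
  -- Part 3 : surjectivity
  intro Tx hTx
  have hev1 : ∀ᶠ x in 𝓝[>] (1/2 : ℝ), Tx < qreTX aX bX aY bY Ty x :=
    htop.eventually_gt_atTop Tx
  obtain ⟨a, haT, haI⟩ := (hev1.and hevIoo').exists
  have hev2 : ∀ᶠ x in 𝓝[<] (1:ℝ), qreTX aX bX aY bY Ty x < Tx :=
    part2.eventually_lt_const hTx
  have hev3 : ∀ᶠ x in 𝓝[<] (1:ℝ), x ∈ Set.Ioo a 1 :=
    Ioo_mem_nhdsLT_of_mem ⟨haI.2, le_rfl⟩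
  obtain ⟨b, hbT, hbI⟩ := (hev2.and hev3).exists
  have hsub : Set.Icc a b ⊆ Set.Ioo (1/2 : ℝ) 1 := fun z hz =>
    ⟨lt_of_lt_of_le haI.1 hz.1, lt_of_le_of_lt hz.2 hbI.2⟩
  have hcont : ContinuousOn (qreTX aX bX aY bY Ty) (Set.Icc a b) := by
    apply ContinuousOn.div hnumcont.continuousOn
    · intro z hz
      have hzI := hsub hz
      have hz0 : (0:ℝ) < 1 / z - 1 := by
        have hz0' : 0 < z := by have := hzI.1; linarith
        have : 1 < 1 / z := one_lt_one_div hz0' hzI.2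
        linarith
      have hz0' : z ≠ 0 := ne_of_gt (by have := hzI.1; linarith)
      have hinner : ContinuousAt (fun x : ℝ => 1 / x - 1) z :=
        (continuousAt_const.div continuousAt_id hz0').sub continuousAt_const
      refine ContinuousAt.continuousWithinAt (ContinuousAt.comp (Real.continuousAt_log ?_) hinner)
      exact hz0.ne'
    · intro z hz
      exact (qre_log_neg (hsub hz)).ne
  have hivt := intermediate_value_Icc' hbI.1.le hcont
  have hmem : Tx ∈ Set.Icc (qreTX aX bX aY bY Ty b) (qreTX aX bX aY bY Ty a) :=
    ⟨hbT.le, haT.le⟩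
  obtain ⟨x, hxI, hxT⟩ := hivt hmem
  exact ⟨x, hsub hxI, hxT⟩
end

section
/- Assume a_X ≥ b_X ≥ 0 with a_X > 0, a_Y + b_Y > 0, and a_Y ≥ b_Y. Then T_X'(x) < 0 for every x ∈ (1/2, 1). -/
/-!
Write `T_X = N / D` with `N = b_X - (a_X + b_X) y` and `D = ln(1/x - 1)`. Since
`D' = -1 / (x (1 - x))`, the quotient rule gives `T_X' = (b_X - (a_X + b_X) L) / (x (1 - x) D²)`,
so it suffices that `L > 1/2` on `(1/2, 1)`, as `a_X ≥ b_X` then makes the numerator negative.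

Both bounds on `L` come from `t (1 - t) ln(1/t - 1) > 1/2 - t` for `t ∈ (1/2, 1)`, which is
`sinh s < s` at `s = ln(1/t - 1) < 0`. Applied at `x` it gives
`L > y - c (x - 1/2) y (1 - y)` with `c = (a_Y + b_Y) / T_y`; the logit identity
`ln(1/y - 1) = (b_Y - (a_Y + b_Y) x) / T_y ≤ -c (x - 1/2)` (this is where `a_Y ≥ b_Y` enters)
turns this into `L ≥ y + y (1 - y) ln(1/y - 1)`, and the same inequality at `y > 1/2` gives `L > 1/2`.
-/

open Real Filter Set Topology

lemma log_inv_sub_one_neg {t : ℝ} (ht : 1 / 2 < t) (ht1 : t < 1) : log (1 / t - 1) < 0 := by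
  have ht0 : 0 < t := by linarith
  apply log_neg
  · rw [sub_pos, lt_div_iff₀ ht0]; linarith
  · rw [sub_lt_iff_lt_add, div_lt_iff₀ ht0]; linarith

lemma half_sub_lt_mul_log_inv_sub_one {t : ℝ} (ht : 1 / 2 < t) (ht1 : t < 1) :
    1 / 2 - t < t * (1 - t) * log (1 / t - 1) := by
  have ht0 : 0 < t := by linarith
  have ht1' : 0 < 1 - t := by linarith
  have hw : 0 < 1 / t - 1 := by rw [sub_pos, lt_div_iff₀ ht0]; linarith
  have hsinh := sinh_lt_self_iff.2 (log_inv_sub_one_neg ht ht1)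
  rw [sinh_log hw] at hsinh
  have hsinh_eq : (1 / t - 1 - (1 / t - 1)⁻¹) / 2 = (1 / 2 - t) / (t * (1 - t)) := by
    field_simp
    ring
  rw [hsinh_eq, div_lt_iff₀ (by positivity)] at hsinh
  linarith

lemma hasDerivAt_log_inv_sub_one {x : ℝ} (hx0 : x ≠ 0) (hx1 : x ≠ 1) :
    HasDerivAt (fun t : ℝ => log (1 / t - 1)) (-(1 / (x * (1 - x)))) x := by
  have hw : 1 / x - 1 ≠ 0 := by
    rw [sub_ne_zero, ne_eq, div_eq_one_iff_eq hx0]; exact hx1.symm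
  have hinner : HasDerivAt (fun t : ℝ => 1 / t - 1) (-(x ^ 2)⁻¹) x := by
    simpa only [one_div] using (hasDerivAt_inv hx0).sub_const 1
  convert hinner.log hw using 1
  have : 1 - x ≠ 0 := sub_ne_zero.2 hx1.symm
  field_simp

section qreY

variable (aY bY Ty : ℝ)

lemma hasDerivAt_qreY (x : ℝ) :
    HasDerivAt (qreY aY bY Ty)
      ((aY + bY) / Ty * (qreY aY bY Ty x * (1 - qreY aY bY Ty x))) x := by
  set E := exp ((bY - (aY + bY) * x) / Ty)
  have hE : 0 < 1 + E := by positivity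
  have hexp : HasDerivAt (fun t : ℝ => 1 + exp ((bY - (aY + bY) * t) / Ty))
      (E * (-((aY + bY) * 1) / Ty)) x :=
    ((((hasDerivAt_id x).const_mul (aY + bY)).const_sub bY).div_const Ty).exp.const_add 1
  refine (hexp.inv hE.ne').congr_deriv ?_
  rw [show qreY aY bY Ty x = (1 + E)⁻¹ from rfl]
  field_simp
  ring

lemma qreY_pos (x : ℝ) : 0 < qreY aY bY Ty x := by
  unfold qreY; positivity

lemma qreY_lt_one (x : ℝ) : qreY aY bY Ty x < 1 :=
  inv_lt_one_of_one_lt₀ (lt_add_of_pos_right 1 (exp_pos _))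

lemma log_inv_qreY_sub_one (x : ℝ) :
    log (1 / qreY aY bY Ty x - 1) = (bY - (aY + bY) * x) / Ty := by
  simp only [qreY, one_div, inv_inv, add_sub_cancel_left, log_exp]

lemma qreL_eq (x : ℝ) :
    qreL aY bY Ty x = qreY aY bY Ty x + x * (1 - x) * log (1 / x - 1) *
      ((aY + bY) / Ty * (qreY aY bY Ty x * (1 - qreY aY bY Ty x))) := by
  rw [qreL, (hasDerivAt_qreY aY bY Ty x).deriv]

end qreY

lemma hasDerivAt_qreTX (aX bX aY bY Ty : ℝ) {x : ℝ} (hx0 : x ≠ 0) (hx1 : x ≠ 1)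
    (hlog : log (1 / x - 1) ≠ 0) :
    HasDerivAt (qreTX aX bX aY bY Ty)
      ((bX - (aX + bX) * qreL aY bY Ty x) / (x * (1 - x) * log (1 / x - 1) ^ 2)) x := by
  have hnum := ((hasDerivAt_qreY aY bY Ty x).const_mul (aX + bX)).const_sub bX
  refine (hnum.div (hasDerivAt_log_inv_sub_one hx0 hx1) hlog).congr_deriv ?_
  have : 1 - x ≠ 0 := sub_ne_zero.2 hx1.symm
  rw [qreL_eq]
  field_simp
  ring

lemma half_lt_qreL {aY bY Ty : ℝ} (hTy : 0 < Ty) (hab : 0 < aY + bY) (hba : bY ≤ aY)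
    {x : ℝ} (hx : 1 / 2 < x) (hx1 : x < 1) : 1 / 2 < qreL aY bY Ty x := by
  set y := qreY aY bY Ty x
  set c := (aY + bY) / Ty
  have hc : 0 < c := div_pos hab hTy
  have hy0 : 0 < y := qreY_pos aY bY Ty x
  have hy1 : y < 1 := qreY_lt_one aY bY Ty x
  have hyy : 0 < y * (1 - y) := mul_pos hy0 (by linarith)
  have hlogit : log (1 / y - 1) ≤ -(c * (x - 1 / 2)) := by
    rw [log_inv_qreY_sub_one, div_le_iff₀ hTy]
    simp only [c]
    field_simp
    nlinarith
  have hy : 1 / 2 < y := by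
    by_contra! hy
    have : 0 ≤ log (1 / y - 1) := log_nonneg (by rw [le_sub_iff_add_le, le_div_iff₀ hy0]; linarith)
    nlinarith
  calc 1 / 2 < y + y * (1 - y) * log (1 / y - 1) := by
        linarith [half_sub_lt_mul_log_inv_sub_one hy hy1]
    _ ≤ y + (1 / 2 - x) * (c * (y * (1 - y))) := by nlinarith
    _ < y + x * (1 - x) * log (1 / x - 1) * (c * (y * (1 - y))) := by
        gcongr
        exact half_sub_lt_mul_log_inv_sub_one hx hx1
    _ = qreL aY bY Ty x := (qreL_eq aY bY Ty x).symm

theorem stmt_5 (aX bX aY bY Ty : ℝ) (hTy : 0 < Ty)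
    (h1 : aX ≥ bX) (h2 : bX ≥ 0) (h3 : 0 < aX) (h4 : aY + bY > 0) (h5 : aY ≥ bY) :
    ∀ x ∈ Set.Ioo (1/2 : ℝ) 1, deriv (qreTX aX bX aY bY Ty) x < 0 := by
  rintro x ⟨hx, hx1⟩
  have hlog := log_inv_sub_one_neg hx hx1
  rw [(hasDerivAt_qreTX aX bX aY bY Ty (by linarith) hx1.ne hlog.ne).deriv]
  have hL := half_lt_qreL hTy h4 h5 hx hx1
  apply div_neg_of_neg_of_pos
  · nlinarith
  · have : 0 < 1 - x := by linarith
    exact mul_pos (mul_pos (by linarith) this) (pow_two_pos_of_ne_zero hlog.ne)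
end

section
/- Assume a_X > b_X > 0, a_Y + b_Y > 0, and b_Y > a_Y. Then for every x ∈ (1/2, 1) with x ≥ b_Y/(a_Y + b_Y), one has L'(x) > 0. -/
open Real Filter Set Topology

/-! With `k = (a_Y + b_Y) / T_y`, `y` is a logistic curve, so `y' = k y (1 - y)` and
`y'' = k y' (1 - 2y)`. Since `ln (1/x - 1)` has derivative `-1 / (x (1 - x))`, the `y'` terms in
`L'` cancel and `L' = ln (1/x - 1) · y' · (1 - 2x + x (1 - x) k (1 - 2y))`. For `x ∈ (1/2, 1)` the
logarithm is negative, and `x ≥ b_Y / (a_Y + b_Y)` puts `y ≥ 1/2`, so the last factor is negative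
as well. -/

lemma hasDerivAt_log_one_div_sub_one {x : ℝ} (hx₀ : x ≠ 0) (hx₁ : x ≠ 1) :
    HasDerivAt (fun t => log (1 / t - 1)) (-(x * (1 - x))⁻¹) x := by
  have hv : x⁻¹ - 1 ≠ 0 := by rwa [sub_ne_zero, ne_eq, inv_eq_one]
  have h := ((hasDerivAt_inv hx₀).sub_const 1).log hv
  simp only [one_div]
  refine h.congr_deriv ?_
  field_simp

lemma hasDerivAt_add_mul_log_one_div_sub_one_mul {y y' : ℝ → ℝ} {y'' x : ℝ} (hx₀ : x ≠ 0) (hx₁ : x ≠ 1)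
    (hy : HasDerivAt y (y' x) x) (hy' : HasDerivAt y' y'' x) :
    HasDerivAt (fun t => y t + t * (1 - t) * log (1 / t - 1) * y' t)
      (log (1 / x - 1) * ((1 - 2 * x) * y' x + x * (1 - x) * y'')) x := by
  have hq : HasDerivAt (fun t : ℝ => t * (1 - t)) (1 - 2 * x) x := by
    refine ((hasDerivAt_id x).mul ((hasDerivAt_id x).const_sub 1)).congr_deriv ?_
    simp only [id_eq]; ring
  refine (hy.add ((hq.mul (hasDerivAt_log_one_div_sub_one hx₀ hx₁)).mul hy')).congr_deriv ?_
  simp only [Pi.mul_apply]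
  field_simp
  ring

section Logistic

variable (aY bY Ty : ℝ)

lemma deriv_qreY :
    deriv (qreY aY bY Ty) = fun x => (aY + bY) / Ty * (qreY aY bY Ty x * (1 - qreY aY bY Ty x)) :=
  funext fun x => (hasDerivAt_qreY aY bY Ty x).deriv

lemma hasDerivAt_deriv_qreY (x : ℝ) :
    HasDerivAt (deriv (qreY aY bY Ty))
      ((aY + bY) / Ty * deriv (qreY aY bY Ty) x * (1 - 2 * qreY aY bY Ty x)) x := by
  rw [deriv_qreY]
  have hy := hasDerivAt_qreY aY bY Ty x
  refine ((hy.mul (hy.const_sub 1)).const_mul ((aY + bY) / Ty)).congr_deriv ?_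
  ring

lemma deriv_qreY_pos (hTy : 0 < Ty) (hY : 0 < aY + bY) (x : ℝ) :
    0 < deriv (qreY aY bY Ty) x := by
  rw [deriv_qreY]
  have := qreY_pos aY bY Ty x
  have := sub_pos.mpr (qreY_lt_one aY bY Ty x)
  positivity

lemma one_half_le_qreY {x : ℝ} (hTy : 0 < Ty) (hY : 0 < aY + bY) (hx : bY / (aY + bY) ≤ x) :
    1 / 2 ≤ qreY aY bY Ty x := by
  have he : exp ((bY - (aY + bY) * x) / Ty) ≤ 1 := by
    rw [exp_le_one_iff]
    apply div_nonpos_of_nonpos_of_nonneg _ hTy.le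
    linarith [(div_le_iff₀ hY).mp hx]
  unfold qreY
  rw [one_div]
  gcongr
  linarith

lemma deriv_qreL {x : ℝ} (hx₀ : x ≠ 0) (hx₁ : x ≠ 1) :
    deriv (qreL aY bY Ty) x = log (1 / x - 1) * deriv (qreY aY bY Ty) x *
      (1 - 2 * x + x * (1 - x) * ((aY + bY) / Ty) * (1 - 2 * qreY aY bY Ty x)) := by
  refine (hasDerivAt_add_mul_log_one_div_sub_one_mul hx₀ hx₁
    (hasDerivAt_qreY aY bY Ty x).differentiableAt.hasDerivAt
    (hasDerivAt_deriv_qreY aY bY Ty x)).deriv.trans ?_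
  ring

end Logistic

lemma log_one_div_sub_one_neg {x : ℝ} (hx₀ : 1 / 2 < x) (hx₁ : x < 1) : log (1 / x - 1) < 0 := by
  apply log_neg
  · rw [sub_pos, lt_div_iff₀ (by linarith)]; linarith
  · rw [sub_lt_iff_lt_add, div_lt_iff₀ (by linarith)]; linarith

theorem stmt_12_general (aY bY Ty : ℝ) (hTy : 0 < Ty)
    (hY : aY + bY > 0) :
    ∀ x ∈ Set.Ioo (1/2 : ℝ) 1, bY / (aY + bY) ≤ x →
      0 < deriv (qreL aY bY Ty) x := by
  rintro x ⟨hx₀, hx₁⟩ hxb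
  rw [deriv_qreL aY bY Ty (by linarith) hx₁.ne]
  refine mul_pos_of_neg_of_neg
    (mul_neg_of_neg_of_pos (log_one_div_sub_one_neg hx₀ hx₁) (deriv_qreY_pos aY bY Ty hTy hY x)) ?_
  have hy := one_half_le_qreY aY bY Ty hTy hY hxb
  have hcurv : x * (1 - x) * ((aY + bY) / Ty) * (1 - 2 * qreY aY bY Ty x) ≤ 0 :=
    mul_nonpos_of_nonneg_of_nonpos
      (mul_nonneg (mul_nonneg (by linarith) (by linarith)) (div_pos hY hTy).le) (by linarith)
  linarith

theorem stmt_12 (aX bX aY bY Ty : ℝ) (hTy : 0 < Ty)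
    (hab : aX > bX) (hbX : bX > 0) (hY : aY + bY > 0) (hba : bY > aY) :
    ∀ x ∈ Set.Ioo (1/2 : ℝ) 1, bY / (aY + bY) ≤ x →
      0 < deriv (qreL aY bY Ty) x :=
  stmt_12_general aY bY Ty hTy hY
end

section
/- Assume a_X > b_X > 0, a_Y + b_Y < 0, and T_y > T_I, where T_I = max{0, (b_Y − a_Y)/(2·ln(a_X/b_X))}. Let x₃ = min{1, (b_Y − T_y·ln(a_X/b_X))/(a_Y + b_Y)}. Then: T_X(x) < 0 for every x ∈ (0, 1/2); T_X(x) > 0 for every x ∈ (1/2, x₃); and T_X'(x) < 0 for every x ∈ (1/2, x₃). -/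
open Real Filter Set Topology

lemma qreY_hasDerivAt (aY bY Ty : ℝ) (x : ℝ) :
    HasDerivAt (qreY aY bY Ty)
      (-(Real.exp ((bY - (aY + bY) * x) / Ty) * (-(aY + bY) / Ty)) /
        (1 + Real.exp ((bY - (aY + bY) * x) / Ty)) ^ 2) x := by
  have hu : HasDerivAt (fun x : ℝ => (bY - (aY + bY) * x) / Ty) (-(aY + bY) / Ty) x := by
    have h1 : HasDerivAt (fun x : ℝ => bY - (aY + bY) * x) (-(aY + bY)) x := by
      simpa using ((hasDerivAt_id x).const_mul (aY + bY)).const_sub bY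
    simpa using h1.div_const Ty
  have h2 : HasDerivAt (fun x : ℝ => 1 + Real.exp ((bY - (aY + bY) * x) / Ty))
      (Real.exp ((bY - (aY + bY) * x) / Ty) * (-(aY + bY) / Ty)) x := hu.exp.const_add 1
  exact h2.inv (by positivity)

lemma logD_hasDerivAt (x : ℝ) (hx0 : 0 < x) (hx1 : x < 1) :
    HasDerivAt (fun x : ℝ => Real.log (1 / x - 1)) ((-(x ^ 2)⁻¹) / (1 / x - 1)) x := by
  have hinv : 0 < 1 / x - 1 := by
    have : 1 < 1 / x := by rw [lt_div_iff₀ hx0]; linarith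
    linarith
  have h1 : HasDerivAt (fun x : ℝ => 1 / x - 1) (-(x ^ 2)⁻¹) x := by
    have := (hasDerivAt_inv (ne_of_gt hx0)).sub_const 1
    simpa [one_div] using this
  exact h1.log (ne_of_gt hinv)

lemma key_neg (aX bX aY bY Ty : ℝ) (hbX : 0 < bX) (x : ℝ)
    (hE : Real.exp ((bY - (aY + bY) * x) / Ty) < aX / bX) :
    bX - (aX + bX) * qreY aY bY Ty x < 0 := by
  set E := Real.exp ((bY - (aY + bY) * x) / Ty) with hEdef
  have hE0 : 0 < E := Real.exp_pos _
  have h1 : E * bX < aX := (lt_div_iff₀ hbX).mp hE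
  have h2 : (0:ℝ) < 1 + E := by linarith
  have h3 : qreY aY bY Ty x = (1 + E)⁻¹ := rfl
  rw [h3]
  have h4 : (1 + E) * (1 + E)⁻¹ = 1 := mul_inv_cancel₀ (ne_of_gt h2)
  have h5 : (0:ℝ) < (1 + E)⁻¹ := inv_pos.2 h2
  nlinarith [h4, h5, h1, hbX, h2]

theorem stmt_15 (aX bX aY bY Ty : ℝ) (hTy : 0 < Ty)
    (hab : aX > bX) (hbX : bX > 0) (hY : aY + bY < 0)
    (hTI : Ty > max 0 ((bY - aY) / (2 * Real.log (aX / bX)))) :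
    (∀ x ∈ Set.Ioo (0:ℝ) (1/2), qreTX aX bX aY bY Ty x < 0) ∧
    (∀ x ∈ Set.Ioo (1/2 : ℝ) (min 1 ((bY - Ty * Real.log (aX / bX)) / (aY + bY))),
      0 < qreTX aX bX aY bY Ty x) ∧
    (∀ x ∈ Set.Ioo (1/2 : ℝ) (min 1 ((bY - Ty * Real.log (aX / bX)) / (aY + bY))),
      deriv (qreTX aX bX aY bY Ty) x < 0) := by
  have hr : 1 < aX / bX := (one_lt_div hbX).mpr hab
  have hL : 0 < Real.log (aX / bX) := Real.log_pos hr
  set L := Real.log (aX / bX) with hLdef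
  -- exp(ux) < aX/bX whenever (bY - (aY+bY)x) < Ty * L
  have hEbound : ∀ x : ℝ, bY - (aY + bY) * x < Ty * L →
      Real.exp ((bY - (aY + bY) * x) / Ty) < aX / bX := by
    intro x hx
    have h1 : (bY - (aY + bY) * x) / Ty < L := by
      rw [div_lt_iff₀ hTy]; linarith
    calc Real.exp ((bY - (aY + bY) * x) / Ty) < Real.exp L := Real.exp_lt_exp.mpr h1
      _ = aX / bX := Real.exp_log (by positivity)
  -- Part 1
  have part1 : ∀ x ∈ Set.Ioo (0:ℝ) (1/2), qreTX aX bX aY bY Ty x < 0 := by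
    intro x hx
    obtain ⟨hx0, hx2⟩ := hx
    have hq : (bY - aY) / (2 * L) < Ty := lt_of_le_of_lt (le_max_right _ _) hTI
    have h2L : (0:ℝ) < 2 * L := by linarith
    have hba : bY - aY < Ty * (2 * L) := (div_lt_iff₀ h2L).mp hq
    have hmul : (aY + bY) * (1/2) < (aY + bY) * x := mul_lt_mul_of_neg_left hx2 hY
    have hE := hEbound x (by nlinarith)
    have hN := key_neg aX bX aY bY Ty hbX x hE
    have hDpos : 0 < Real.log (1 / x - 1) := by
      apply Real.log_pos
      rw [lt_sub_iff_add_lt, lt_div_iff₀ hx0]; linarith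
    exact div_neg_of_neg_of_pos hN hDpos
  -- setup shared by parts 2 and 3
  have setup : ∀ x ∈ Set.Ioo (1/2 : ℝ) (min 1 ((bY - Ty * L) / (aY + bY))),
      0 < x ∧ x < 1 ∧ 0 < 1 / x - 1 ∧ Real.log (1 / x - 1) < 0 ∧
      bX - (aX + bX) * qreY aY bY Ty x < 0 := by
    intro x hx
    obtain ⟨hx2, hxm⟩ := hx
    have hx0 : (0:ℝ) < x := by linarith
    have hx1 : x < 1 := lt_of_lt_of_le hxm (min_le_left _ _)
    have hxq : x < (bY - Ty * L) / (aY + bY) := lt_of_lt_of_le hxm (min_le_right _ _)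
    have hlt : bY - Ty * L < (aY + bY) * x := by
      have := (lt_div_iff_of_neg hY).mp hxq
      linarith
    have hE := hEbound x (by linarith)
    have hN := key_neg aX bX aY bY Ty hbX x hE
    have hinv : 0 < 1 / x - 1 := by
      have : 1 < 1 / x := by rw [lt_div_iff₀ hx0]; linarith
      linarith
    have hDneg : Real.log (1 / x - 1) < 0 := by
      apply Real.log_neg hinv
      rw [sub_lt_iff_lt_add, div_lt_iff₀ hx0]; linarith
    exact ⟨hx0, hx1, hinv, hDneg, hN⟩
  refine ⟨part1, ?_, ?_⟩
  · -- Part 2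
    intro x hx
    obtain ⟨hx0, hx1, hinv, hDneg, hN⟩ := setup x hx
    have := div_pos (neg_pos.mpr hN) (neg_pos.mpr hDneg)
    rwa [neg_div_neg_eq] at this
  · -- Part 3
    intro x hx
    obtain ⟨hx0, hx1, hinv, hDneg, hN⟩ := setup x hx
    set E := Real.exp ((bY - (aY + bY) * x) / Ty) with hEdef
    have hE0 : 0 < E := Real.exp_pos _
    set yd : ℝ := -(E * (-(aY + bY) / Ty)) / (1 + E) ^ 2 with hyddef
    have hyd : yd < 0 := by
      apply div_neg_of_neg_of_pos
      · have : 0 < E * (-(aY + bY) / Ty) := by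
          apply mul_pos hE0
          apply div_pos (by linarith) hTy
        linarith
      · positivity
    set D : ℝ := Real.log (1 / x - 1) with hDdef
    set D' : ℝ := (-(x ^ 2)⁻¹) / (1 / x - 1) with hD'def
    have hD' : D' < 0 := by
      apply div_neg_of_neg_of_pos _ hinv
      have : 0 < (x ^ 2)⁻¹ := by positivity
      linarith
    have hNder : HasDerivAt (fun x => bX - (aX + bX) * qreY aY bY Ty x)
        (-((aX + bX) * yd)) x :=
      ((qreY_hasDerivAt aY bY Ty x).const_mul (aX + bX)).const_sub bX
    have hDder : HasDerivAt (fun x : ℝ => Real.log (1 / x - 1)) D' x :=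
      logD_hasDerivAt x hx0 hx1
    have hTX : HasDerivAt (qreTX aX bX aY bY Ty)
        ((-((aX + bX) * yd) * D - (bX - (aX + bX) * qreY aY bY Ty x) * D') / D ^ 2) x :=
      hNder.div hDder (ne_of_lt hDneg)
    rw [hTX.deriv]
    apply div_neg_of_neg_of_pos
    · have h1 : -((aX + bX) * yd) * D < 0 := by
        apply mul_neg_of_pos_of_neg _ hDneg
        have : (aX + bX) * yd < 0 := mul_neg_of_pos_of_neg (by linarith) hyd
        linarith
      have h2 : 0 < (bX - (aX + bX) * qreY aY bY Ty x) * D' := mul_pos_of_neg_of_neg hN hD'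
      linarith
    · have hDne : D ≠ 0 := ne_of_lt hDneg
      positivity
end
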